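/- For every integer n ≥ 3, the integral ∫_{-∞}^{0} log(−z) / (1−z)^n dz equals −H(n−2) / (n−1). -/

import Mathlib

/-!
After `t = -z` and with `m = n - 1`, the integral is `∫₀^∞ log t / (1 + t)^(m+1) dt`. Writing
`w = (1 + t)⁻¹`, it has the primitive
`Q(t) = ((1 - w^m) log t - log (1 + t) + ∑_{k=1}^{m-1} w^k / k) / m`,
as the geometric sum `1 - w^m = t (w + ⋯ + w^m)` shows. `Q` vanishes at `∞`, and the same identity
turns `(1 - w^m) log t` into `t log t · (w + ⋯ + w^m)`, so `Q` is continuous at `0` with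
`Q(0) = H(m-1) / m`. The integrand has constant sign on `(0, 1]` and on `[1, ∞)`, so its
integrability also follows from `Q`.
-/

open Real MeasureTheory

/-- The `m`-th harmonic number `H(m) = ∑_{i=1}^{m} 1/i`, with `H(0) = 0`. -/
noncomputable def H (m : ℕ) : ℝ := ∑ i ∈ Finset.range m, (1 : ℝ) / (i + 1)

open Set Filter Topology

lemma one_sub_inv_one_add_pow {t : ℝ} (ht : 1 + t ≠ 0) (m : ℕ) :
    1 - (1 + t)⁻¹ ^ m = t * ∑ k ∈ Finset.range m, (1 + t)⁻¹ ^ (k + 1) := by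
  have h : 1 - (1 + t)⁻¹ = t * (1 + t)⁻¹ := by field_simp; ring
  rw [← mul_neg_geom_sum, h, mul_assoc, Finset.mul_sum]
  simp_rw [pow_succ']

lemma hasDerivAt_inv_one_add_pow (j : ℕ) {t : ℝ} (ht : 1 + t ≠ 0) :
    HasDerivAt (fun t => (1 + t)⁻¹ ^ j) (-(j * (1 + t)⁻¹ ^ (j + 1))) t := by
  refine ((((hasDerivAt_id' t).const_add 1).fun_inv ht).fun_pow j).congr_deriv ?_
  rcases j with _ | j
  · simp
  · simp only [Nat.add_sub_cancel, neg_div, one_div, ← inv_pow]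
    ring

noncomputable def primitiveLogDivOneAddPow (m : ℕ) (t : ℝ) : ℝ :=
  ((1 - (1 + t)⁻¹ ^ m) * log t - log (1 + t)
    + ∑ k ∈ Finset.range (m - 1), (1 + t)⁻¹ ^ (k + 1) / (k + 1)) / m

lemma hasDerivAt_primitiveLogDivOneAddPow {m : ℕ} (hm : m ≠ 0) {t : ℝ} (ht : 0 < t) :
    HasDerivAt (primitiveLogDivOneAddPow m) (log t / (1 + t) ^ (m + 1)) t := by
  have ht₁ : 1 + t ≠ 0 := by positivity
  have hsum : HasDerivAt
      (fun t : ℝ => ∑ k ∈ Finset.range (m - 1), (1 + t)⁻¹ ^ (k + 1) / ((k : ℝ) + 1))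
      (-∑ k ∈ Finset.range (m - 1), (1 + t)⁻¹ ^ (k + 1 + 1)) t := by
    rw [← Finset.sum_neg_distrib]
    refine HasDerivAt.fun_sum fun k _ =>
      ((hasDerivAt_inv_one_add_pow (k + 1) ht₁).div_const _).congr_deriv ?_
    push_cast
    field_simp
  have := (((((hasDerivAt_inv_one_add_pow m ht₁).const_sub 1).mul (hasDerivAt_log ht.ne')).sub
    (((hasDerivAt_id' t).const_add 1).log ht₁)).add hsum).div_const (m : ℝ)
  refine this.congr_deriv ?_
  obtain ⟨p, rfl⟩ := Nat.exists_eq_add_one_of_ne_zero hm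
  rw [one_sub_inv_one_add_pow ht₁, Finset.sum_range_succ', Nat.add_sub_cancel]
  generalize ∑ k ∈ Finset.range p, (1 + t)⁻¹ ^ (k + 1 + 1) = S
  simp only [inv_pow]
  field_simp
  ring

lemma continuousOn_primitiveLogDivOneAddPow (m : ℕ) :
    ContinuousOn (primitiveLogDivOneAddPow m) (Ioi (-1)) := by
  have hne : ∀ t ∈ Ioi (-1 : ℝ), 1 + t ≠ 0 := fun t (ht : -1 < t) => by linarith
  have hcont : ContinuousOn (fun t => (t * log t * ∑ k ∈ Finset.range m, (1 + t)⁻¹ ^ (k + 1)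
      - log (1 + t) + ∑ k ∈ Finset.range (m - 1), (1 + t)⁻¹ ^ (k + 1) / ((k : ℝ) + 1)) / m)
      (Ioi (-1)) := by
    refine (((continuous_mul_log.continuousOn.mul ?_).sub ?_).add ?_).div_const _ <;>
      fun_prop (disch := assumption)
  refine hcont.congr fun t ht => ?_
  rw [primitiveLogDivOneAddPow, one_sub_inv_one_add_pow (hne t ht)]
  ring

lemma primitiveLogDivOneAddPow_zero (m : ℕ) :
    primitiveLogDivOneAddPow m 0 = H (m - 1) / m := by
  simp [primitiveLogDivOneAddPow, H]

lemma tendsto_primitiveLogDivOneAddPow_atTop {m : ℕ} (hm : m ≠ 0) :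
    Tendsto (primitiveLogDivOneAddPow m) atTop (𝓝 0) := by
  have hlog : Tendsto (fun t => log t / (1 + t) ^ m) atTop (𝓝 0) := by
    refine tendsto_of_tendsto_of_tendsto_of_le_of_le' tendsto_const_nhds
      (by simpa using tendsto_pow_log_div_mul_add_atTop 1 1 1 one_ne_zero) ?_ ?_
    · filter_upwards [eventually_ge_atTop 1] with t ht
      exact div_nonneg (log_nonneg ht) (by positivity)
    · filter_upwards [eventually_ge_atTop 1] with t ht
      rw [add_comm t 1]
      exact div_le_div_of_nonneg_left (log_nonneg ht) (by positivity)
        (le_self_pow₀ (by linarith) hm)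
  have hsum : Tendsto
      (fun t : ℝ => ∑ k ∈ Finset.range (m - 1), (1 + t)⁻¹ ^ (k + 1) / ((k : ℝ) + 1))
      atTop (𝓝 0) := by
    have hinv : Tendsto (fun t : ℝ => (1 + t)⁻¹) atTop (𝓝 0) :=
      tendsto_inv_atTop_zero.comp (tendsto_atTop_add_const_left _ 1 tendsto_id)
    simpa using tendsto_finsetSum _ fun k _ => (hinv.pow (k + 1)).div_const ((k : ℝ) + 1)
  have := ((hlog.neg.sub (tendsto_log_comp_add_sub_log 1)).add hsum).div_const (m : ℝ)
  simp only [neg_zero, sub_zero, add_zero, zero_div] at this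
  refine this.congr' ?_
  filter_upwards [eventually_gt_atTop 0] with t ht
  rw [primitiveLogDivOneAddPow, inv_pow, add_comm t 1]
  ring

lemma integrableOn_Ioi_log_div_one_add_pow {m : ℕ} (hm : m ≠ 0) :
    IntegrableOn (fun t => log t / (1 + t) ^ (m + 1)) (Ioi 0) := by
  have hderiv : ∀ t ∈ Ioi (0 : ℝ),
      HasDerivAt (primitiveLogDivOneAddPow m) (log t / (1 + t) ^ (m + 1)) t :=
    fun t ht => hasDerivAt_primitiveLogDivOneAddPow hm ht
  rw [← Ioc_union_Ioi_eq_Ioi zero_le_one]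
  refine IntegrableOn.union ?_ ?_
  · have hcont : ContinuousOn (primitiveLogDivOneAddPow m) (Icc 0 1) :=
      (continuousOn_primitiveLogDivOneAddPow m).mono
        ((Icc_subset_Ioi_iff zero_le_one).2 (by norm_num))
    simpa using (intervalIntegral.integrableOn_deriv_of_nonneg hcont.neg
      (fun t ht => (hderiv t ht.1).neg) fun t ht =>
        neg_nonneg.2 (div_nonpos_of_nonpos_of_nonneg (log_nonpos ht.1.le ht.2.le)
          (pow_nonneg (by linarith [ht.1]) _))).neg
  · exact integrableOn_Ioi_deriv_of_nonneg'
      (fun t (ht : 1 ≤ t) => hderiv t (zero_lt_one.trans_le ht))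
      (fun t (ht : 1 < t) => div_nonneg (log_nonneg ht.le) (pow_nonneg (by linarith) _))
      (tendsto_primitiveLogDivOneAddPow_atTop hm)

theorem integral_Ioi_log_div_one_add_pow {m : ℕ} (hm : m ≠ 0) :
    ∫ t in Ioi 0, log t / (1 + t) ^ (m + 1) = -H (m - 1) / m := by
  rw [integral_Ioi_of_hasDerivAt_of_tendsto
    ((continuousOn_primitiveLogDivOneAddPow m).continuousAt
      (Ioi_mem_nhds (by norm_num))).continuousWithinAt
    (fun t ht => hasDerivAt_primitiveLogDivOneAddPow hm ht)
    (integrableOn_Ioi_log_div_one_add_pow hm) (tendsto_primitiveLogDivOneAddPow_atTop hm),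
    primitiveLogDivOneAddPow_zero, zero_sub, neg_div]

/-- For every integer `n ≥ 3`, `∫_{-∞}^{0} log(−z) / (1−z)^n dz = −H(n−2) / (n−1)`. -/
theorem integral_log_neg_div_one_sub_pow (n : ℕ) (hn : 3 ≤ n) :
    (∫ z in Set.Iio (0 : ℝ), Real.log (-z) / (1 - z) ^ n) =
      -H (n - 2) / ((n : ℝ) - 1) := by
  obtain ⟨m, rfl⟩ : ∃ m, n = m + 1 := ⟨n - 1, by omega⟩
  have hreflect := integral_comp_neg_Ioi 0 fun z : ℝ => log (-z) / (1 - z) ^ (m + 1)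
  simp only [neg_neg, sub_neg_eq_add, neg_zero] at hreflect
  rw [← integral_Iic_eq_integral_Iio, ← hreflect, integral_Ioi_log_div_one_add_pow (by omega),
    show m + 1 - 2 = m - 1 by omega]
  push_cast
  ring
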